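/- arXiv:1508.07880 — 4 statements merged into one kernel-verified Lean document; each statement's English description precedes it below -/
import Mathlib

section
/- Let R be a commutative ring. The Tate-continuous R-linear endomorphisms of V = R((t)) form a subring E of the ring of all R-linear endomorphisms of V (E contains the identity and is closed under addition, negation and composition), the bounded Tate-continuous endomorphisms form a two-sided ideal I⁺ of E, and the discrete Tate-continuous endomorphisms form a two-sided ideal I⁻ of E. -/
open HahnSeries

variable (R : Type*) [CommRing R]

/-- The standard lattice `L n ⊆ R((t))`: Laurent series whose coefficients vanish in
all degrees `< n`.  In particular `L 0 = R[[t]]`. -/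
def standardLattice (n : ℤ) : Submodule R (LaurentSeries R) where
  carrier := {f | ∀ m : ℤ, m < n → f.coeff m = 0}
  add_mem' := by
    intro a b ha hb m hm
    simp [HahnSeries.coeff_add, ha m hm, hb m hm]
  zero_mem' := by intro m hm; simp
  smul_mem' := by
    intro c a ha m hm
    simp [HahnSeries.coeff_smul, ha m hm]

/-- An `R`-linear endomorphism of `R((t))` is Tate-continuous if
(a) every standard lattice is mapped into some standard lattice, and
(b) for every standard lattice `L m` there is a standard lattice `L n` mapped into it. -/
def IsTateContinuous (φ : Module.End R (LaurentSeries R)) : Prop :=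
  (∀ n : ℤ, ∃ m : ℤ, ∀ v ∈ standardLattice R n, φ v ∈ standardLattice R m) ∧
  (∀ m : ℤ, ∃ n : ℤ, ∀ v ∈ standardLattice R n, φ v ∈ standardLattice R m)

/-- An endomorphism of `R((t))` is bounded if its range is contained in a standard lattice. -/
def IsBoundedEndo (φ : Module.End R (LaurentSeries R)) : Prop :=
  ∃ m : ℤ, ∀ v : LaurentSeries R, φ v ∈ standardLattice R m

/-- An endomorphism of `R((t))` is discrete if it vanishes on some standard lattice. -/
def IsDiscreteEndo (φ : Module.End R (LaurentSeries R)) : Prop :=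
  ∃ n : ℤ, ∀ v ∈ standardLattice R n, φ v = 0

/-!
The standard lattices decrease as `n` grows, so two lattice conditions can always be met
simultaneously by passing to the smaller target index (`min`) or the larger source index
(`max`); this gives closure under addition. For products, condition (a) on the left factor
carries a range contained in a lattice into a lattice, and condition (b) on the right factor
carries a lattice into the lattice on which the left factor vanishes.
-/

section

variable {R}

local notation "End" => Module.End R (LaurentSeries R)

theorem standardLattice_antitone : Antitone (standardLattice R) :=
  fun _ _ hmn _ hv k hk => hv k (hk.trans_le hmn)

theorem add_mem_standardLattice_min {m₁ m₂ : ℤ} {v w : LaurentSeries R}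
    (hv : v ∈ standardLattice R m₁) (hw : w ∈ standardLattice R m₂) :
    v + w ∈ standardLattice R (min m₁ m₂) :=
  add_mem (standardLattice_antitone (min_le_left _ _) hv)
    (standardLattice_antitone (min_le_right _ _) hw)

namespace IsTateContinuous

theorem one : IsTateContinuous R 1 :=
  ⟨fun n => ⟨n, fun _ hv => hv⟩, fun m => ⟨m, fun _ hv => hv⟩⟩

theorem zero : IsTateContinuous R 0 :=
  ⟨fun _ => ⟨0, fun _ _ => zero_mem _⟩, fun _ => ⟨0, fun _ _ => zero_mem _⟩⟩

theorem add {φ ψ : End} (hφ : IsTateContinuous R φ) (hψ : IsTateContinuous R ψ) :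
    IsTateContinuous R (φ + ψ) := by
  constructor
  · intro n
    obtain ⟨m₁, h₁⟩ := hφ.1 n
    obtain ⟨m₂, h₂⟩ := hψ.1 n
    exact ⟨min m₁ m₂, fun v hv => add_mem_standardLattice_min (h₁ v hv) (h₂ v hv)⟩
  · intro m
    obtain ⟨n₁, h₁⟩ := hφ.2 m
    obtain ⟨n₂, h₂⟩ := hψ.2 m
    refine ⟨max n₁ n₂, fun v hv => add_mem (h₁ v ?_) (h₂ v ?_)⟩
    · exact standardLattice_antitone (le_max_left _ _) hv
    · exact standardLattice_antitone (le_max_right _ _) hv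

theorem neg {φ : End} (hφ : IsTateContinuous R φ) : IsTateContinuous R (-φ) := by
  constructor
  · intro n
    obtain ⟨m, hm⟩ := hφ.1 n
    exact ⟨m, fun v hv => neg_mem (hm v hv)⟩
  · intro m
    obtain ⟨n, hn⟩ := hφ.2 m
    exact ⟨n, fun v hv => neg_mem (hn v hv)⟩

theorem mul {φ ψ : End} (hφ : IsTateContinuous R φ) (hψ : IsTateContinuous R ψ) :
    IsTateContinuous R (φ * ψ) := by
  constructor
  · intro n
    obtain ⟨m, hm⟩ := hψ.1 n
    obtain ⟨k, hk⟩ := hφ.1 m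
    exact ⟨k, fun v hv => hk _ (hm v hv)⟩
  · intro k
    obtain ⟨m, hm⟩ := hφ.2 k
    obtain ⟨n, hn⟩ := hψ.2 m
    exact ⟨n, fun v hv => hm _ (hn v hv)⟩

end IsTateContinuous

namespace IsBoundedEndo

theorem zero : IsBoundedEndo R 0 :=
  ⟨0, fun _ => zero_mem _⟩

theorem add {φ ψ : End} (hφ : IsBoundedEndo R φ) (hψ : IsBoundedEndo R ψ) :
    IsBoundedEndo R (φ + ψ) :=
  let ⟨_, h₁⟩ := hφ
  let ⟨_, h₂⟩ := hψ
  ⟨_, fun v => add_mem_standardLattice_min (h₁ v) (h₂ v)⟩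

theorem neg {φ : End} (hφ : IsBoundedEndo R φ) : IsBoundedEndo R (-φ) :=
  let ⟨m, hm⟩ := hφ
  ⟨m, fun v => neg_mem (hm v)⟩

theorem mul_left {φ ψ : End} (hφ : IsTateContinuous R φ) (hψ : IsBoundedEndo R ψ) :
    IsBoundedEndo R (φ * ψ) :=
  let ⟨m, hm⟩ := hψ
  let ⟨k, hk⟩ := hφ.1 m
  ⟨k, fun v => hk _ (hm v)⟩

theorem mul_right {φ : End} (ψ : End) (hφ : IsBoundedEndo R φ) : IsBoundedEndo R (φ * ψ) :=
  let ⟨m, hm⟩ := hφ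
  ⟨m, fun v => hm (ψ v)⟩

end IsBoundedEndo

namespace IsDiscreteEndo

theorem zero : IsDiscreteEndo R 0 :=
  ⟨0, fun _ _ => rfl⟩

theorem add {φ ψ : End} (hφ : IsDiscreteEndo R φ) (hψ : IsDiscreteEndo R ψ) :
    IsDiscreteEndo R (φ + ψ) := by
  obtain ⟨n₁, h₁⟩ := hφ
  obtain ⟨n₂, h₂⟩ := hψ
  refine ⟨max n₁ n₂, fun v hv => ?_⟩
  rw [LinearMap.add_apply, h₁ v (standardLattice_antitone (le_max_left _ _) hv),
    h₂ v (standardLattice_antitone (le_max_right _ _) hv), add_zero]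

theorem neg {φ : End} (hφ : IsDiscreteEndo R φ) : IsDiscreteEndo R (-φ) :=
  let ⟨n, hn⟩ := hφ
  ⟨n, fun v hv => by rw [LinearMap.neg_apply, hn v hv, neg_zero]⟩

theorem mul_left (φ : End) {ψ : End} (hψ : IsDiscreteEndo R ψ) : IsDiscreteEndo R (φ * ψ) :=
  let ⟨n, hn⟩ := hψ
  ⟨n, fun v hv => by rw [Module.End.mul_apply, hn v hv, map_zero]⟩

theorem mul_right {φ ψ : End} (hφ : IsDiscreteEndo R φ) (hψ : IsTateContinuous R ψ) :
    IsDiscreteEndo R (φ * ψ) :=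
  let ⟨m, hm⟩ := hφ
  let ⟨n, hn⟩ := hψ.2 m
  ⟨n, fun v hv => hm _ (hn v hv)⟩

end IsDiscreteEndo

variable (R)

def tateSubring : Subring (Module.End R (LaurentSeries R)) where
  carrier := {φ | IsTateContinuous R φ}
  one_mem' := IsTateContinuous.one
  mul_mem' := IsTateContinuous.mul
  zero_mem' := IsTateContinuous.zero
  add_mem' := IsTateContinuous.add
  neg_mem' := IsTateContinuous.neg

def boundedIdeal : TwoSidedIdeal (tateSubring R) :=
  .mk' {φ | IsBoundedEndo R φ} IsBoundedEndo.zero IsBoundedEndo.add IsBoundedEndo.neg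
    (fun {φ _} => IsBoundedEndo.mul_left φ.2) (fun {_ ψ} => IsBoundedEndo.mul_right (ψ : End))

def discreteIdeal : TwoSidedIdeal (tateSubring R) :=
  .mk' {φ | IsDiscreteEndo R φ} IsDiscreteEndo.zero IsDiscreteEndo.add IsDiscreteEndo.neg
    (fun {φ _} => IsDiscreteEndo.mul_left (φ : End))
    (fun {_ ψ} hφ => IsDiscreteEndo.mul_right hφ ψ.2)

variable {R}

theorem mem_boundedIdeal (φ : tateSubring R) : φ ∈ boundedIdeal R ↔ IsBoundedEndo R φ :=
  TwoSidedIdeal.mem_mk' ..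

theorem mem_discreteIdeal (φ : tateSubring R) : φ ∈ discreteIdeal R ↔ IsDiscreteEndo R φ :=
  TwoSidedIdeal.mem_mk' ..

end

/-- The Tate-continuous `R`-linear endomorphisms of `R((t))` form a subring `E` of the
endomorphism ring of `R((t))`; the bounded Tate-continuous endomorphisms form a two-sided
ideal `I⁺` of `E`, and the discrete Tate-continuous endomorphisms form a two-sided ideal
`I⁻` of `E`. -/
theorem tateContinuous_subring_bounded_discrete_ideals :
    ∃ E : Subring (Module.End R (LaurentSeries R)),
      (∀ φ : Module.End R (LaurentSeries R), φ ∈ E ↔ IsTateContinuous R φ) ∧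
      (∃ Iplus : TwoSidedIdeal E, ∀ φ : E,
        φ ∈ Iplus ↔ IsBoundedEndo R (φ : Module.End R (LaurentSeries R))) ∧
      (∃ Iminus : TwoSidedIdeal E, ∀ φ : E,
        φ ∈ Iminus ↔ IsDiscreteEndo R (φ : Module.End R (LaurentSeries R))) :=
  ⟨tateSubring R, fun _ => Iff.rfl,
    ⟨boundedIdeal R, mem_boundedIdeal⟩, ⟨discreteIdeal R, mem_discreteIdeal⟩⟩
end

section
/- Let R be a commutative ring. Every Tate-continuous R-linear endomorphism f of V = R((t)) can be written as f = g + h, where g is a bounded Tate-continuous endomorphism of V and h is a discrete Tate-continuous endomorphism of V; that is, with E the ring of Tate-continuous endomorphisms and I⁺, I⁻ its ideals of bounded and discrete endomorphisms, one has E = I⁺ + I⁻. -/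
open HahnSeries

variable (R : Type*) [CommRing R]

/-!
The truncation `P = truncLT 0`, which keeps the coefficients in negative degrees, kills `L 0`,
while `1 - P` maps `R((t))` into `L 0`, and both preserve every standard lattice.
Hence `f = f (1 - P) + f P` is the required decomposition: the bounded and discrete
endomorphisms are left ideals among Tate-continuous ones.
-/

section

variable {R}

lemma IsTateContinuous.comp {φ ψ : Module.End R (LaurentSeries R)}
    (hφ : IsTateContinuous R φ) (hψ : IsTateContinuous R ψ) :
    IsTateContinuous R (φ ∘ₗ ψ) := by
  constructor
  · intro n
    obtain ⟨m, hm⟩ := hψ.1 n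
    obtain ⟨k, hk⟩ := hφ.1 m
    exact ⟨k, fun v hv => hk _ (hm v hv)⟩
  · intro k
    obtain ⟨m, hm⟩ := hφ.2 k
    obtain ⟨n, hn⟩ := hψ.2 m
    exact ⟨n, fun v hv => hm _ (hn v hv)⟩

lemma isTateContinuous_of_map_mem_standardLattice {φ : Module.End R (LaurentSeries R)}
    (hφ : ∀ n, ∀ v ∈ standardLattice R n, φ v ∈ standardLattice R n) :
    IsTateContinuous R φ :=
  ⟨fun n => ⟨n, hφ n⟩, fun m => ⟨m, hφ m⟩⟩

lemma IsBoundedEndo.comp {φ ψ : Module.End R (LaurentSeries R)}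
    (hφ : IsTateContinuous R φ) (hψ : IsBoundedEndo R ψ) :
    IsBoundedEndo R (φ ∘ₗ ψ) := by
  obtain ⟨n, hn⟩ := hψ
  obtain ⟨m, hm⟩ := hφ.1 n
  exact ⟨m, fun v => hm _ (hn v)⟩

lemma IsDiscreteEndo.comp (φ : Module.End R (LaurentSeries R))
    {ψ : Module.End R (LaurentSeries R)} (hψ : IsDiscreteEndo R ψ) :
    IsDiscreteEndo R (φ ∘ₗ ψ) := by
  obtain ⟨n, hn⟩ := hψ
  exact ⟨n, fun v hv => by rw [LinearMap.comp_apply, hn v hv, map_zero]⟩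

lemma coeff_sub_truncLT (c : ℤ) (v : LaurentSeries R) (i : ℤ) :
    (v - truncLT c v).coeff i = if i < c then 0 else v.coeff i := by
  rw [coeff_sub, HahnSeries.coeff_truncLT]
  split_ifs <;> simp

lemma truncLT_mem_standardLattice (c : ℤ) {n : ℤ} {v : LaurentSeries R}
    (hv : v ∈ standardLattice R n) : truncLT c v ∈ standardLattice R n := by
  intro i hi
  rw [HahnSeries.coeff_truncLT, hv i hi, ite_self]

lemma sub_truncLT_mem_standardLattice (c : ℤ) {n : ℤ} {v : LaurentSeries R}
    (hv : v ∈ standardLattice R n) : v - truncLT c v ∈ standardLattice R n := by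
  intro i hi
  rw [coeff_sub_truncLT, hv i hi, ite_self]

lemma sub_truncLT_mem_standardLattice_self (c : ℤ) (v : LaurentSeries R) :
    v - truncLT c v ∈ standardLattice R c := by
  intro i hi
  rw [coeff_sub_truncLT, if_pos hi]

lemma truncLT_eq_zero_of_mem_standardLattice {c : ℤ} {v : LaurentSeries R}
    (hv : v ∈ standardLattice R c) : truncLT c v = 0 := by
  ext i
  rw [HahnSeries.coeff_truncLT, coeff_zero]
  split_ifs with hi
  exacts [hv i hi, rfl]

lemma isTateContinuous_truncLT (c : ℤ) :
    IsTateContinuous R (truncLTLinearMap R c) :=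
  isTateContinuous_of_map_mem_standardLattice fun _ _ => truncLT_mem_standardLattice c

lemma isDiscreteEndo_truncLT (c : ℤ) : IsDiscreteEndo R (truncLTLinearMap R c) :=
  ⟨c, fun _ => truncLT_eq_zero_of_mem_standardLattice⟩

lemma isTateContinuous_id_sub_truncLT (c : ℤ) :
    IsTateContinuous R (LinearMap.id - truncLTLinearMap R c) :=
  isTateContinuous_of_map_mem_standardLattice fun _ _ => sub_truncLT_mem_standardLattice c

lemma isBoundedEndo_id_sub_truncLT (c : ℤ) :
    IsBoundedEndo R (LinearMap.id - truncLTLinearMap R c) :=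
  ⟨c, sub_truncLT_mem_standardLattice_self c⟩

end

/-- Every Tate-continuous endomorphism of `R((t))` decomposes as the sum of a bounded
Tate-continuous endomorphism and a discrete Tate-continuous endomorphism: `E = I⁺ + I⁻`. -/
theorem tateContinuous_eq_bounded_add_discrete
    (f : Module.End R (LaurentSeries R)) (hf : IsTateContinuous R f) :
    ∃ g h : Module.End R (LaurentSeries R),
      IsTateContinuous R g ∧ IsBoundedEndo R g ∧
      IsTateContinuous R h ∧ IsDiscreteEndo R h ∧ f = g + h := by
  refine ⟨f ∘ₗ (LinearMap.id - truncLTLinearMap R 0), f ∘ₗ truncLTLinearMap R 0,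
    hf.comp (isTateContinuous_id_sub_truncLT 0), (isBoundedEndo_id_sub_truncLT 0).comp hf,
    hf.comp (isTateContinuous_truncLT 0), (isDiscreteEndo_truncLT 0).comp f, ?_⟩
  rw [← LinearMap.comp_add, sub_add_cancel, LinearMap.comp_id]
end

section
/- Let k be a field and X = k[X] × k[[X]], the product of the polynomial ring and the power series ring over k, regarded as a k-vector space. Define the k-linear map φ : X → X by φ(a, b) = (0, ι(a)), where ι : k[X] → k[[X]] is the canonical inclusion of polynomials into power series. Then φ vanishes on the subspace {0} × k[[X]], its range is contained in {0} × k[[X]], yet the range of φ is infinite-dimensional over k; in particular a single finite endomorphism of an elementary Tate object need not factor through a finite-dimensional k-vector space. -/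
open Polynomial

/-- The `k`-linear endomorphism `φ (a, b) = (0, ι a)` of `k[X] × k[[X]]`, where
`ι : k[X] → k[[X]]` is the canonical inclusion of polynomials into power series. -/
noncomputable def finiteButNotFiniteRank (k : Type*) [Field k] :
    (Polynomial k × PowerSeries k) →ₗ[k] (Polynomial k × PowerSeries k) where
  toFun x := (0, (x.1 : PowerSeries k))
  map_add' a b := by
    refine Prod.ext (by simp) ?_
    simp [Polynomial.coe_add]
  map_smul' c a := by
    refine Prod.ext (by simp) ?_
    simp only [RingHom.id_apply, Prod.smul_snd]
    ext n
    simp [Polynomial.coeff_coe]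

/-- `φ` vanishes on the lattice `{0} × k[[X]]`, its range is contained in the lattice
`{0} × k[[X]]`, yet its range is infinite-dimensional over `k`: a single finite
endomorphism of an elementary Tate object need not factor through a finite-dimensional
vector space. -/
theorem finiteButNotFiniteRank_spec (k : Type*) [Field k] :
    (∀ b : PowerSeries k, finiteButNotFiniteRank k (0, b) = 0) ∧
    (∀ x : Polynomial k × PowerSeries k, (finiteButNotFiniteRank k x).1 = 0) ∧
    ¬ FiniteDimensional k (LinearMap.range (finiteButNotFiniteRank k)) := by
  refine ⟨fun b => rfl, fun x => rfl, fun hfin => ?_⟩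
  let f : Polynomial k →ₗ[k] LinearMap.range (finiteButNotFiniteRank k) :=
    (finiteButNotFiniteRank k ∘ₗ LinearMap.inl k (Polynomial k) (PowerSeries k)).codRestrict
      (LinearMap.range (finiteButNotFiniteRank k)) (fun p => ⟨(p, 0), rfl⟩)
  have hinj : Function.Injective f := by
    intro p q h
    have h2 : finiteButNotFiniteRank k (p, 0) = finiteButNotFiniteRank k (q, 0) :=
      congrArg Subtype.val h
    have : (p : PowerSeries k) = (q : PowerSeries k) := congrArg Prod.snd h2
    exact Polynomial.coe_injective k this
  have : FiniteDimensional k (Polynomial k) := FiniteDimensional.of_injective f hinj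
  have := FiniteDimensional.fintypeBasisIndex (Polynomial.basisMonomials k)
  exact (instInfiniteNat).not_finite (Finite.of_fintype ℕ)
end

section
/- Let p be a prime. (i) Every additive map g : ℚ_p → ℚ_p whose range is norm-bounded (there exists C such that ‖g x‖ ≤ C for all x ∈ ℚ_p) is identically zero. (ii) Every additive map h : ℚ_p → ℚ_p that vanishes on some ball around 0 (there exists ε > 0 with h x = 0 whenever ‖x‖ ≤ ε) is identically zero. Consequently there exist no additive maps g, h : ℚ_p → ℚ_p with g + h = id such that g has norm-bounded range and h vanishes on a ball around 0. -/
/-! Multiplication by `p` contracts the `p`-adic norm by the factor `p⁻¹ < 1` and is bijective on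
`ℚ_p`. Hence a bounded additive map satisfies `‖g x‖ = ‖p‖ⁿ ‖g (x / pⁿ)‖ ≤ ‖p‖ⁿ C → 0`, while a map
vanishing on a ball kills `pⁿ x` for large `n`, hence kills `x` because `ℚ_p` has no torsion.
Were `id = g + h` such a decomposition, both parts would vanish and so would `id`. -/

open Filter Topology

theorem norm_pow_nsmul {F : Type*} [NormedDivisionRing F] (k n : ℕ) (v : F) :
    ‖(k ^ n) • v‖ = ‖(k : F)‖ ^ n * ‖v‖ := by
  rw [nsmul_eq_mul, Nat.cast_pow, norm_mul, norm_pow]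

theorem exists_pow_nsmul_eq_of_surjective_nsmul {G : Type*} [AddCommMonoid G] {k : ℕ}
    (hk : Function.Surjective fun y : G ↦ k • y) (n : ℕ) (x : G) : ∃ y : G, (k ^ n) • y = x := by
  induction n generalizing x with
  | zero => exact ⟨x, one_nsmul x⟩
  | succ n ih =>
    obtain ⟨z, rfl⟩ := ih x
    obtain ⟨y, rfl⟩ := hk z
    exact ⟨y, by rw [pow_succ, mul_nsmul']⟩

theorem AddMonoidHom.eq_zero_of_bounded_of_surjective_nsmul {G F : Type*} [AddCommGroup G]
    [NormedDivisionRing F] {k : ℕ} (hk : Function.Surjective fun y : G ↦ k • y)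
    (hkF : ‖(k : F)‖ < 1) (f : G →+ F) {C : ℝ} (hC : ∀ x, ‖f x‖ ≤ C) : f = 0 := by
  ext x
  have hbound : ∀ n : ℕ, ‖f x‖ ≤ ‖(k : F)‖ ^ n * C := fun n ↦ by
    obtain ⟨y, rfl⟩ := exists_pow_nsmul_eq_of_surjective_nsmul hk n x
    rw [map_nsmul, norm_pow_nsmul]
    exact mul_le_mul_of_nonneg_left (hC y) (by positivity)
  have hlim : Tendsto (fun n : ℕ ↦ ‖(k : F)‖ ^ n * C) atTop (𝓝 0) := by
    simpa using (tendsto_pow_atTop_nhds_zero_of_lt_one (norm_nonneg _) hkF).mul_const C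
  exact norm_le_zero_iff.mp (ge_of_tendsto' hlim hbound)

theorem AddMonoidHom.eq_zero_of_vanishes_on_ball {E G : Type*} [NormedDivisionRing E]
    [AddCommGroup G] [IsAddTorsionFree G] {k : ℕ} (hk : k ≠ 0) (hkE : ‖(k : E)‖ < 1)
    (f : E →+ G) {ε : ℝ} (hε : 0 < ε) (hf : ∀ x, ‖x‖ ≤ ε → f x = 0) : f = 0 := by
  ext x
  have hlim : Tendsto (fun n : ℕ ↦ ‖(k ^ n) • x‖) atTop (𝓝 0) := by
    simpa [norm_pow_nsmul] using
      (tendsto_pow_atTop_nhds_zero_of_lt_one (norm_nonneg _) hkE).mul_const ‖x‖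
  obtain ⟨n, hn⟩ := (hlim.eventually (eventually_le_nhds hε)).exists
  have hkill : (k ^ n) • f x = (k ^ n) • (0 : G) := by
    rw [← map_nsmul, hf _ hn, smul_zero]
  exact nsmul_right_injective (pow_ne_zero n hk) hkill

theorem Padic.surjective_nsmul (p : ℕ) [Fact p.Prime] :
    Function.Surjective fun y : ℚ_[p] ↦ p • y := fun x ↦
  ⟨x / p, by
    dsimp only
    rw [nsmul_eq_mul, mul_div_cancel₀ x (Nat.cast_ne_zero.mpr (Fact.out : p.Prime).ne_zero)]⟩

/-- For the field `ℚ_p` of `p`-adic numbers: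
(i) every additive map `g : ℚ_p → ℚ_p` with norm-bounded range is zero;
(ii) every additive map `h : ℚ_p → ℚ_p` vanishing on some ball around `0` is zero;
consequently there is no decomposition `id = g + h` with `g` of norm-bounded range
and `h` vanishing on a ball around `0`. -/
theorem padic_no_bounded_discrete_decomposition (p : ℕ) [Fact p.Prime] :
    (∀ g : ℚ_[p] →+ ℚ_[p], (∃ C : ℝ, ∀ x : ℚ_[p], ‖g x‖ ≤ C) → g = 0) ∧
    (∀ h : ℚ_[p] →+ ℚ_[p], (∃ ε : ℝ, 0 < ε ∧ ∀ x : ℚ_[p], ‖x‖ ≤ ε → h x = 0) → h = 0) ∧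
    ¬ ∃ (g h : ℚ_[p] →+ ℚ_[p]),
        (∃ C : ℝ, ∀ x : ℚ_[p], ‖g x‖ ≤ C) ∧
        (∃ ε : ℝ, 0 < ε ∧ ∀ x : ℚ_[p], ‖x‖ ≤ ε → h x = 0) ∧
        (∀ x : ℚ_[p], g x + h x = x) := by
  have bounded : ∀ g : ℚ_[p] →+ ℚ_[p], (∃ C : ℝ, ∀ x, ‖g x‖ ≤ C) → g = 0 :=
    fun g ⟨_, hC⟩ ↦
      g.eq_zero_of_bounded_of_surjective_nsmul (Padic.surjective_nsmul p) Padic.norm_p_lt_one hC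
  have discrete :
      ∀ h : ℚ_[p] →+ ℚ_[p], (∃ ε : ℝ, 0 < ε ∧ ∀ x : ℚ_[p], ‖x‖ ≤ ε → h x = 0) → h = 0 :=
    fun h ⟨_, hε, hball⟩ ↦
      h.eq_zero_of_vanishes_on_ball (Fact.out : p.Prime).ne_zero Padic.norm_p_lt_one hε hball
  refine ⟨bounded, discrete, ?_⟩
  rintro ⟨g, h, hg, hh, hsum⟩
  have hone := hsum 1
  rw [bounded g hg, discrete h hh] at hone
  simp at hone
end
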